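/- Let Z be a Gaussian random variable with variance ς² bounded away from zero and infinity: 0 < c ≤ ς² ≤ C < ∞, with density f. Then there exist constants D₄, D₅ > 0 and exponents 0 < a₄ ≤ a₃ depending only on c, C such that for all sufficiently small δ > 0, P( f(Z - u) ≤ D₄ δ^{a₃} for all |u| ≤ δ ) ≤ D₅ δ^{a₄}. -/

import Mathlib

/-!
Taking `u = 0`, the event forces `f(Z) ≤ δ`. For any density `f`, on `{f ≤ δ}` we have
`f = f ^ p * f ^ q ≤ δ ^ p * f ^ q` whenever `p + q = 1`, so `P(f(Z) ≤ δ) ≤ δ ^ p ∫ f ^ q`.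
For the Gaussian of variance `v` and `p = q = 1/2`, `√f` is a multiple of the density of
variance `2v`, whence `∫ √f = (8πv) ^ (1/4) ≤ (8πC) ^ (1/4)`.
-/

open MeasureTheory ProbabilityTheory Real
open scoped NNReal ENNReal

theorem withDensity_setOf_le_le_rpow_mul_lintegral {α : Type*} [MeasurableSpace α]
    {μ : Measure α} {f : α → ℝ≥0∞} (hf : Measurable f) (δ : ℝ≥0∞) {p q : ℝ} (hp : 0 ≤ p)
    (hq : 0 ≤ q) (hpq : p + q = 1) :
    μ.withDensity f {x | f x ≤ δ} ≤ δ ^ p * ∫⁻ x, f x ^ q ∂μ := by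
  rw [withDensity_apply _ (measurableSet_le hf measurable_const),
    ← lintegral_const_mul _ (hf.pow_const q)]
  refine (setLIntegral_mono (measurable_const.mul (hf.pow_const q)) fun x hx => ?_).trans
    (setLIntegral_le_lintegral _ _)
  calc f x = f x ^ p * f x ^ q := by
        rw [← ENNReal.rpow_add_of_nonneg _ _ hp hq, hpq, ENNReal.rpow_one]
    _ ≤ δ ^ p * f x ^ q := by gcongr; exact hx

theorem inv_sqrt_rpow_half_eq {w : ℝ} (hw : 0 < w) :
    (√w)⁻¹ ^ (1 / 2 : ℝ) = (4 * w) ^ (1 / 4 : ℝ) * (√(2 * w))⁻¹ := by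
  have h4 : (4 : ℝ) ^ (1 / 4 : ℝ) = √2 := by
    rw [show (4 : ℝ) = 2 ^ (2 : ℝ) by norm_num, ← Real.rpow_mul (by norm_num), Real.sqrt_eq_rpow]
    norm_num
  rw [Real.mul_rpow (by norm_num) hw.le, h4, Real.sqrt_mul (by norm_num), mul_inv,
    Real.sqrt_eq_rpow, ← Real.rpow_neg hw.le, ← Real.rpow_mul hw.le,
    mul_mul_mul_comm, mul_inv_cancel₀ (by positivity), one_mul, ← Real.rpow_add hw]
  norm_num

theorem gaussianPDFReal_rpow_half (a : ℝ) {v : ℝ≥0} (hv : v ≠ 0) (x : ℝ) :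
    gaussianPDFReal a v x ^ (1 / 2 : ℝ) =
      (8 * π * v) ^ (1 / 4 : ℝ) * gaussianPDFReal a (2 * v) x := by
  have hv_pos : (0 : ℝ) < v := by positivity
  simp only [gaussianPDFReal, NNReal.coe_mul, NNReal.coe_ofNat]
  rw [show 8 * π * (v : ℝ) = 4 * (2 * π * v) by ring,
    show 2 * π * (2 * (v : ℝ)) = 2 * (2 * π * v) by ring,
    Real.mul_rpow (by positivity) (by positivity), ← Real.exp_mul,
    inv_sqrt_rpow_half_eq (by positivity : 0 < 2 * π * v)]
  have hexp : -(x - a) ^ 2 / (2 * (v : ℝ)) * (1 / 2) = -(x - a) ^ 2 / (2 * (2 * v)) := by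
    field_simp
  rw [hexp]
  ring

theorem lintegral_gaussianPDF_rpow_half (a : ℝ) {v : ℝ≥0} (hv : v ≠ 0) :
    ∫⁻ x, gaussianPDF a v x ^ (1 / 2 : ℝ) = ENNReal.ofReal ((8 * π * v) ^ (1 / 4 : ℝ)) := by
  have hpdf (x : ℝ) : gaussianPDF a v x ^ (1 / 2 : ℝ) =
      ENNReal.ofReal ((8 * π * v) ^ (1 / 4 : ℝ)) * gaussianPDF a (2 * v) x := by
    rw [gaussianPDF, gaussianPDF, ENNReal.ofReal_rpow_of_nonneg (gaussianPDFReal_nonneg _ _ _)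
      (by norm_num), gaussianPDFReal_rpow_half a hv, ENNReal.ofReal_mul (by positivity)]
  simp_rw [hpdf]
  rw [lintegral_const_mul _ (measurable_gaussianPDF _ _),
    lintegral_gaussianPDF_eq_one _ (mul_ne_zero two_ne_zero hv), mul_one]

/-- For a Gaussian with variance bounded away from 0 and ∞, the probability that
the density is uniformly small in a δ-neighborhood of the variable is O(δ^{a₄}). -/
theorem stmt_4 (c C : ℝ) (hc : 0 < c) (hcC : c ≤ C) :
    ∃ D₄ > (0 : ℝ), ∃ D₅ > (0 : ℝ), ∃ a₃ a₄ : ℝ, 0 < a₄ ∧ a₄ ≤ a₃ ∧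
      ∃ δ₀ > (0 : ℝ), ∀ (a : ℝ) (v : ℝ≥0), c ≤ (v : ℝ) → (v : ℝ) ≤ C →
        ∀ δ : ℝ, 0 < δ → δ < δ₀ →
          (gaussianReal a v)
              {x : ℝ | ∀ u : ℝ, |u| ≤ δ → gaussianPDFReal a v (x - u) ≤ D₄ * δ ^ a₃}
            ≤ ENNReal.ofReal (D₅ * δ ^ a₄) := by
  have hC : 0 < C := hc.trans_le hcC
  refine ⟨1, one_pos, (8 * π * C) ^ (1 / 4 : ℝ), by positivity, 1, 1 / 2, by norm_num,
    by norm_num, 1, one_pos, fun a v hcv hvC δ hδ _ => ?_⟩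
  have hv : v ≠ 0 := NNReal.coe_ne_zero.mp (hc.trans_le hcv).ne'
  have hsub : {x : ℝ | ∀ u : ℝ, |u| ≤ δ → gaussianPDFReal a v (x - u) ≤ 1 * δ ^ (1 : ℝ)}
      ⊆ {x | gaussianPDF a v x ≤ ENNReal.ofReal δ} := fun x hx => by
    simpa [gaussianPDF, hδ.le] using ENNReal.ofReal_le_ofReal (hx 0 (by simp [hδ.le]))
  calc gaussianReal a v _ ≤ gaussianReal a v {x | gaussianPDF a v x ≤ ENNReal.ofReal δ} :=
        measure_mono hsub
    _ ≤ ENNReal.ofReal δ ^ (1 / 2 : ℝ) * ENNReal.ofReal ((8 * π * v) ^ (1 / 4 : ℝ)) := by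
        rw [gaussianReal_of_var_ne_zero _ hv, ← lintegral_gaussianPDF_rpow_half a hv]
        exact withDensity_setOf_le_le_rpow_mul_lintegral (measurable_gaussianPDF a v) _
          (by norm_num) (by norm_num) (by norm_num)
    _ ≤ ENNReal.ofReal ((8 * π * C) ^ (1 / 4 : ℝ) * δ ^ (1 / 2 : ℝ)) := by
        rw [ENNReal.ofReal_rpow_of_nonneg hδ.le (by norm_num), ← ENNReal.ofReal_mul (by positivity),
          mul_comm]
        gcongr
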